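/- One forward-Euler step of the upwind-with-minmod advection-diffusion scheme preserves nonnegativity of the cell averages: if all f_{i,j}^k ≥ 0 and the time step satisfies, for some θ ∈ (0,1), Δt · max(2a/(θΔx), 2b/(θΔy), (1/(2(1−θ)))(c/Δx² + d/Δy²)) ≤ 1 with a = sup|u_{i+1,j}^k + u_{i,j}^k|, b = sup|z_{i,j+1}^k + z_{i,j}^k|, c = sup(D_{i+1,j}^k + 2D_{i,j}^k + D_{i−1,j}^k), d = sup(D_{i,j+1}^k + 2D_{i,j}^k + D_{i,j−1}^k), then all updated values f_{i,j}^{k+1} ≥ 0. -/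

import Mathlib

/-- The minmod limiter of three slopes. -/
noncomputable def minmod3 (a b c : ℝ) : ℝ :=
  if 0 < a ∧ 0 < b ∧ 0 < c then min a (min b c)
  else if a < 0 ∧ b < 0 ∧ c < 0 then max a (max b c)
  else 0

/-- Minmod slope in the `x`-direction in cell `(i,j)`. -/
noncomputable def sigmaX (f : ℤ → ℤ → ℝ) (i j : ℤ) : ℝ :=
  minmod3 (2 * (f (i + 1) j - f i j)) ((f (i + 1) j - f (i - 1) j) / 2)
    (2 * (f i j - f (i - 1) j))

/-- Minmod slope in the `y`-direction in cell `(i,j)`. -/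
noncomputable def sigmaY (f : ℤ → ℤ → ℝ) (i j : ℤ) : ℝ :=
  minmod3 (2 * (f i (j + 1) - f i j)) ((f i (j + 1) - f i (j - 1)) / 2)
    (2 * (f i j - f i (j - 1)))

/-- Upwind advective flux `F_{i+1/2,j}` with minmod-reconstructed interface values. -/
noncomputable def fluxF (f u : ℤ → ℤ → ℝ) (i j : ℤ) : ℝ :=
  max 0 ((u i j + u (i + 1) j) / 2) * (f i j + sigmaX f i j / 2) +
  min 0 ((u i j + u (i + 1) j) / 2) * (f (i + 1) j - sigmaX f (i + 1) j / 2)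

/-- Upwind advective flux `G_{i,j+1/2}`. -/
noncomputable def fluxG (f z : ℤ → ℤ → ℝ) (i j : ℤ) : ℝ :=
  max 0 ((z i j + z i (j + 1)) / 2) * (f i j + sigmaY f i j / 2) +
  min 0 ((z i j + z i (j + 1)) / 2) * (f i (j + 1) - sigmaY f i (j + 1) / 2)

/-- Diffusive flux `H_{i+1/2,j} = (1/(2Δx))(D_{i+1,j} + D_{i,j})(f_{i+1,j} − f_{i,j})`. -/
noncomputable def fluxH (f D : ℤ → ℤ → ℝ) (Δx : ℝ) (i j : ℤ) : ℝ :=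
  (1 / (2 * Δx)) * (D (i + 1) j + D i j) * (f (i + 1) j - f i j)

/-- Diffusive flux `M_{i,j+1/2}`. -/
noncomputable def fluxM (f D : ℤ → ℤ → ℝ) (Δy : ℝ) (i j : ℤ) : ℝ :=
  (1 / (2 * Δy)) * (D i (j + 1) + D i j) * (f i (j + 1) - f i j)

/-- One forward-Euler step of the upwind/minmod advection–diffusion scheme. -/
noncomputable def eulerStep (f u z D : ℤ → ℤ → ℝ) (Δx Δy Δt : ℝ) (i j : ℤ) : ℝ :=
  f i j
    - Δt / Δx * (fluxF f u i j - fluxF f u (i - 1) j)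
    - Δt / Δy * (fluxG f z i j - fluxG f z i (j - 1))
    + Δt / Δx * (fluxH f D Δx i j - fluxH f D Δx (i - 1) j)
    + Δt / Δy * (fluxM f D Δy i j - fluxM f D Δy i (j - 1))

/-! Each of the three parts of the update is controlled by the value `f i j` of the centre cell:
the upwind differences in `x` and `y` remove at most `Δt a / Δx · f i j` and `Δt b / Δy · f i j`,
because the minmod reconstruction keeps every interface value nonnegative and the two interface
values of a cell average to `f i j`; the diffusive differences remove at most
`Δt c / (2Δx²) · f i j` and `Δt d / (2Δy²) · f i j`. The CFL condition splits `1 = θ/2 + θ/2 + (1 - θ)`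
among these four losses. -/

open Function

lemma minmod3_le_max_zero_right (a b c : ℝ) : minmod3 a b c ≤ max 0 c := by
  unfold minmod3
  split_ifs with hpos hneg
  · exact (min_le_right _ _).trans ((min_le_right _ _).trans (le_max_right _ _))
  · exact (max_lt hneg.1 (max_lt hneg.2.1 hneg.2.2)).le.trans (le_max_left _ _)
  · exact le_max_left _ _

lemma min_zero_left_le_minmod3 (a b c : ℝ) : min 0 a ≤ minmod3 a b c := by
  unfold minmod3
  split_ifs with hpos hneg
  · exact (min_le_left _ _).trans (lt_min hpos.1 (lt_min hpos.2.1 hpos.2.2)).le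
  · exact (min_le_right _ _).trans (le_max_left _ _)
  · exact min_le_left _ _

lemma minmod3_reconstruction_nonneg {x m y : ℝ} (hx : 0 ≤ x) (hm : 0 ≤ m) (hy : 0 ≤ y) :
    0 ≤ m + minmod3 (2 * (y - m)) ((y - x) / 2) (2 * (m - x)) / 2 ∧
    0 ≤ m - minmod3 (2 * (y - m)) ((y - x) / 2) (2 * (m - x)) / 2 := by
  have hlow := min_zero_left_le_minmod3 (2 * (y - m)) ((y - x) / 2) (2 * (m - x))
  have hup := minmod3_le_max_zero_right (2 * (y - m)) ((y - x) / 2) (2 * (m - x))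
  have hmin : -(2 * m) ≤ min 0 (2 * (y - m)) := le_min (by linarith) (by linarith)
  have hmax : max 0 (2 * (m - x)) ≤ 2 * m := max_le (by linarith) (by linarith)
  constructor <;> linarith

lemma sigmaX_reconstruction_nonneg {f : ℤ → ℤ → ℝ} (hf : ∀ i j, 0 ≤ f i j) (i j : ℤ) :
    0 ≤ f i j + sigmaX f i j / 2 ∧ 0 ≤ f i j - sigmaX f i j / 2 :=
  minmod3_reconstruction_nonneg (hf (i - 1) j) (hf i j) (hf (i + 1) j)

/-- The upwind flux through an interface with velocity `v`, left trace `fl` and right trace `fr`. -/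
noncomputable def upwindFlux (v fl fr : ℝ) : ℝ :=
  max 0 v * fl + min 0 v * fr

lemma fluxF_eq_upwindFlux (f u : ℤ → ℤ → ℝ) (i j : ℤ) :
    fluxF f u i j = upwindFlux ((u i j + u (i + 1) j) / 2)
      (f i j + sigmaX f i j / 2) (f (i + 1) j - sigmaX f (i + 1) j / 2) :=
  rfl

/-- Only the outflow through either interface of a cell can decrease it, and the outflow is carried
by the cell's own traces `p` (right edge) and `m` (left edge). -/
lemma upwindFlux_sub_le {s v₀ v₁ fl p m fr : ℝ} (h₀ : |v₀| ≤ s) (h₁ : |v₁| ≤ s)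
    (hfl : 0 ≤ fl) (hp : 0 ≤ p) (hm : 0 ≤ m) (hfr : 0 ≤ fr) :
    upwindFlux v₁ p fr - upwindFlux v₀ fl m ≤ s * (p + m) := by
  have hs : 0 ≤ s := (abs_nonneg _).trans h₀
  have hout₁ : max 0 v₁ * p ≤ s * p :=
    mul_le_mul_of_nonneg_right (max_le hs ((le_abs_self _).trans h₁)) hp
  have hout₀ : -min 0 v₀ * m ≤ s * m :=
    mul_le_mul_of_nonneg_right (neg_le.mp (le_min (neg_nonpos.mpr hs) (neg_le_of_abs_le h₀))) hm
  have hin₁ : min 0 v₁ * fr ≤ 0 := mul_nonpos_of_nonpos_of_nonneg (min_le_left _ _) hfr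
  have hin₀ : 0 ≤ max 0 v₀ * fl := mul_nonneg (le_max_left _ _) hfl
  unfold upwindFlux
  linarith

lemma fluxF_sub_le {f u : ℤ → ℤ → ℝ} {a : ℝ} (hf : ∀ i j, 0 ≤ f i j)
    (ha : ∀ i j, |u (i + 1) j + u i j| ≤ a) (i j : ℤ) :
    fluxF f u i j - fluxF f u (i - 1) j ≤ a * f i j := by
  have hv : ∀ k, |(u k j + u (k + 1) j) / 2| ≤ a / 2 := fun k => by
    rw [abs_div, abs_two, add_comm]
    linarith [ha k j]
  have hrec := sigmaX_reconstruction_nonneg hf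
  have h := upwindFlux_sub_le (hv (i - 1)) (hv i) (hrec (i - 1) j).1 (hrec i j).1 (hrec i j).2
    (hrec (i + 1) j).2
  rw [sub_add_cancel] at h
  rw [fluxF_eq_upwindFlux, fluxF_eq_upwindFlux, sub_add_cancel]
  linarith

lemma fluxH_sub_ge {f D : ℤ → ℤ → ℝ} {Δx c : ℝ} (hΔx : 0 ≤ Δx) (hf : ∀ i j, 0 ≤ f i j)
    (hD : ∀ i j, 0 ≤ D i j) (hc : ∀ i j, D (i + 1) j + 2 * D i j + D (i - 1) j ≤ c) (i j : ℤ) :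
    -(c / (2 * Δx)) * f i j ≤ fluxH f D Δx i j - fluxH f D Δx (i - 1) j := by
  have hE : 0 ≤ (D (i + 1) j + D i j) * f (i + 1) j :=
    mul_nonneg (add_nonneg (hD _ _) (hD _ _)) (hf _ _)
  have hW : 0 ≤ (D i j + D (i - 1) j) * f (i - 1) j :=
    mul_nonneg (add_nonneg (hD _ _) (hD _ _)) (hf _ _)
  have hC : (D (i + 1) j + 2 * D i j + D (i - 1) j) * f i j ≤ c * f i j :=
    mul_le_mul_of_nonneg_right (hc i j) (hf i j)
  have hstencil : -(c * f i j) ≤ (D (i + 1) j + D i j) * (f (i + 1) j - f i j)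
      - (D i j + D (i - 1) j) * (f i j - f (i - 1) j) := by
    linarith
  unfold fluxH
  rw [sub_add_cancel]
  calc -(c / (2 * Δx)) * f i j = 1 / (2 * Δx) * -(c * f i j) := by ring
    _ ≤ 1 / (2 * Δx) * ((D (i + 1) j + D i j) * (f (i + 1) j - f i j)
          - (D i j + D (i - 1) j) * (f i j - f (i - 1) j)) :=
        mul_le_mul_of_nonneg_left hstencil (by positivity)
    _ = _ := by ring

lemma eulerStep_ge {f u z D : ℤ → ℤ → ℝ} {Δx Δy Δt a b c d : ℝ}
    (hΔx : 0 ≤ Δx) (hΔy : 0 ≤ Δy) (hΔt : 0 ≤ Δt)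
    (hf : ∀ i j, 0 ≤ f i j) (hD : ∀ i j, 0 ≤ D i j)
    (ha : ∀ i j, |u (i + 1) j + u i j| ≤ a)
    (hb : ∀ i j, |z i (j + 1) + z i j| ≤ b)
    (hc : ∀ i j, D (i + 1) j + 2 * D i j + D (i - 1) j ≤ c)
    (hd : ∀ i j, D i (j + 1) + 2 * D i j + D i (j - 1) ≤ d) (i j : ℤ) :
    (1 - Δt / Δx * a - Δt / Δy * b - Δt / Δx * (c / (2 * Δx)) - Δt / Δy * (d / (2 * Δy)))
      * f i j ≤ eulerStep f u z D Δx Δy Δt i j := by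
  have hswap : ∀ i j, 0 ≤ swap f i j := fun i j => hf j i
  have hF := fluxF_sub_le hf ha i j
  -- `fluxG` and `fluxM` are `fluxF` and `fluxH` of the transposed grid functions, definitionally.
  have hG : fluxG f z i j - fluxG f z i (j - 1) ≤ b * f i j :=
    fluxF_sub_le hswap (u := swap z) (fun i j => hb j i) j i
  have hH := fluxH_sub_ge hΔx hf hD hc i j
  have hM : -(d / (2 * Δy)) * f i j ≤ fluxM f D Δy i j - fluxM f D Δy i (j - 1) :=
    fluxH_sub_ge hΔy hswap (D := swap D) (fun i j => hD j i) (fun i j => hd j i) j i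
  have hrx : 0 ≤ Δt / Δx := div_nonneg hΔt hΔx
  have hry : 0 ≤ Δt / Δy := div_nonneg hΔt hΔy
  unfold eulerStep
  linarith [mul_le_mul_of_nonneg_left hF hrx, mul_le_mul_of_nonneg_left hG hry,
    mul_le_mul_of_nonneg_left hH hrx, mul_le_mul_of_nonneg_left hM hry]

lemma cfl_split {Δx Δy Δt a b c d θ : ℝ} (hΔt : 0 ≤ Δt) (hθ : θ ∈ Set.Ioo (0 : ℝ) 1)
    (hCFL : Δt * max (2 * a / (θ * Δx))
        (max (2 * b / (θ * Δy))
          (1 / (2 * (1 - θ)) * (c / Δx ^ 2 + d / Δy ^ 2))) ≤ 1) :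
    Δt / Δx * a ≤ θ / 2 ∧ Δt / Δy * b ≤ θ / 2 ∧
      Δt / Δx * (c / (2 * Δx)) + Δt / Δy * (d / (2 * Δy)) ≤ 1 - θ := by
  obtain ⟨hθ0, hθ1⟩ := hθ
  have hA : Δt * (2 * a / (θ * Δx)) ≤ 1 :=
    (mul_le_mul_of_nonneg_left (le_max_left _ _) hΔt).trans hCFL
  have hB : Δt * (2 * b / (θ * Δy)) ≤ 1 :=
    (mul_le_mul_of_nonneg_left ((le_max_left _ _).trans (le_max_right _ _)) hΔt).trans hCFL
  have hC : Δt * (1 / (2 * (1 - θ)) * (c / Δx ^ 2 + d / Δy ^ 2)) ≤ 1 :=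
    (mul_le_mul_of_nonneg_left ((le_max_right _ _).trans (le_max_right _ _)) hΔt).trans hCFL
  refine ⟨?_, ?_, ?_⟩
  · calc Δt / Δx * a = θ / 2 * (Δt * (2 * a / (θ * Δx))) := by field_simp
      _ ≤ θ / 2 := mul_le_of_le_one_right (by positivity) hA
  · calc Δt / Δy * b = θ / 2 * (Δt * (2 * b / (θ * Δy))) := by field_simp
      _ ≤ θ / 2 := mul_le_of_le_one_right (by positivity) hB
  · calc Δt / Δx * (c / (2 * Δx)) + Δt / Δy * (d / (2 * Δy))
        = (1 - θ) * (Δt * (1 / (2 * (1 - θ)) * (c / Δx ^ 2 + d / Δy ^ 2))) := by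
          field_simp [(by linarith : (1 - θ) ≠ 0)]
      _ ≤ 1 - θ := mul_le_of_le_one_right (by linarith) hC

/-- One forward-Euler step of the upwind-with-minmod advection-diffusion
scheme preserves nonnegativity of the cell averages under the CFL-like condition
`Δt · max(2a/(θΔx), 2b/(θΔy), (1/(2(1−θ)))(c/Δx² + d/Δy²)) ≤ 1` for some `θ ∈ (0,1)`,
where `a,b` bound `|u_{i+1,j}+u_{i,j}|`, `|z_{i,j+1}+z_{i,j}|` and `c,d` bound the
diffusion stencil sums. -/
theorem euler_step_preserves_nonnegativity
    (f u z D : ℤ → ℤ → ℝ) (Δx Δy Δt a b c d θ : ℝ)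
    (hΔx : 0 < Δx) (hΔy : 0 < Δy) (hΔt : 0 < Δt)
    (hf : ∀ i j, 0 ≤ f i j) (hD : ∀ i j, 0 ≤ D i j)
    (ha : ∀ i j, |u (i + 1) j + u i j| ≤ a)
    (hb : ∀ i j, |z i (j + 1) + z i j| ≤ b)
    (hc : ∀ i j, D (i + 1) j + 2 * D i j + D (i - 1) j ≤ c)
    (hd : ∀ i j, D i (j + 1) + 2 * D i j + D i (j - 1) ≤ d)
    (hθ : θ ∈ Set.Ioo (0 : ℝ) 1)
    (hCFL : Δt * max (2 * a / (θ * Δx))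
        (max (2 * b / (θ * Δy))
          (1 / (2 * (1 - θ)) * (c / Δx ^ 2 + d / Δy ^ 2))) ≤ 1) :
    ∀ i j, 0 ≤ eulerStep f u z D Δx Δy Δt i j := by
  intro i j
  obtain ⟨hx, hy, hdiff⟩ := cfl_split hΔt.le hθ hCFL
  have hcoef : 0 ≤ 1 - Δt / Δx * a - Δt / Δy * b - Δt / Δx * (c / (2 * Δx))
      - Δt / Δy * (d / (2 * Δy)) := by
    linarith
  exact (mul_nonneg hcoef (hf i j)).trans
    (eulerStep_ge hΔx.le hΔy.le hΔt.le hf hD ha hb hc hd i j)
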